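/- Truth Lemma: for every world Γ (maximal consistent subset of the closure Σ) of the canonical model C_Σ and every formula φ ∈ Σ, φ ∈ Γ if and only if C_Σ, Γ ⊨ φ. -/

import Mathlib

/-- CIEL world formulae over agent formulae `AgF` and world atoms `At`,
with `⊥` and `→` as primitive Boolean connectives. -/
inductive WF (AgF At : Type) : Type
  | bot
  | atom (p : At)
  | imp (φ χ : WF AgF At)
  | C (ψ : AgF) (φ : WF AgF At)

/-- Negation `¬φ := φ → ⊥`. -/
def wneg {AgF At : Type} (φ : WF AgF At) : WF AgF At := .imp φ .bot

/-- Conjunction `φ ∧ χ := ¬(φ → ¬χ)`. -/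
def wand {AgF At : Type} (φ χ : WF AgF At) : WF AgF At := wneg (.imp φ (wneg χ))

/-- `P_ψ φ := ¬C_ψ ¬φ`. -/
def wP {AgF At : Type} (ψ : AgF) (φ : WF AgF At) : WF AgF At := wneg (.C ψ (wneg φ))

/-- Conjunction of a finite list of formulae. -/
def conj {AgF At : Type} : List (WF AgF At) → WF AgF At
  | [] => wneg .bot
  | φ :: l => wand φ (conj l)

/-- The Hilbert system `C5`: a complete propositional base together with the
axioms (T), (⊥), (K), (4), (5), (Ind) and the rules (Nec) and (AM); the rule
(AM) refers to derivability `AgDer γ ψ` of `γ → ψ` in the agent logic, and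
`agBot`, `agOr` are falsum and disjunction of agent formulae. -/
inductive C5 {AgF At : Type} (AgDer : AgF → AgF → Prop) (agBot : AgF)
    (agOr : AgF → AgF → AgF) : WF AgF At → Prop
  | ax1 (φ χ) : C5 AgDer agBot agOr (.imp φ (.imp χ φ))
  | ax2 (φ χ θ) : C5 AgDer agBot agOr
      (.imp (.imp φ (.imp χ θ)) (.imp (.imp φ χ) (.imp φ θ)))
  | ax3 (φ χ) : C5 AgDer agBot agOr
      (.imp (.imp (wneg φ) (wneg χ)) (.imp χ φ))
  | mp {φ χ} : C5 AgDer agBot agOr (.imp φ χ) → C5 AgDer agBot agOr φ →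
      C5 AgDer agBot agOr χ
  | axT (ψ φ) : C5 AgDer agBot agOr (.imp (.C ψ φ) φ)
  | axBot (φ) : C5 AgDer agBot agOr (.imp φ (.C agBot φ))
  | axK (ψ φ γ) : C5 AgDer agBot agOr
      (.imp (.C ψ (.imp φ γ)) (.imp (.C ψ φ) (.C ψ γ)))
  | ax4 (ψ φ) : C5 AgDer agBot agOr (.imp (.C ψ φ) (.C ψ (.C ψ φ)))
  | ax5 (ψ φ) : C5 AgDer agBot agOr
      (.imp (wneg (.C ψ φ)) (.C ψ (wneg (.C ψ φ))))
  | axInd (ψ χ φ) : C5 AgDer agBot agOr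
      (.imp (.C (agOr ψ χ) (.imp φ (wand (.C ψ φ) (.C χ φ))))
        (.imp φ (.C (agOr ψ χ) φ)))
  | nec {φ} (ψ) : C5 AgDer agBot agOr φ → C5 AgDer agBot agOr (.C ψ φ)
  | am {γ ψ} (φ) : AgDer γ ψ →
      C5 AgDer agBot agOr (.imp (.C ψ φ) (.C γ φ))

/-- A formula is consistent if its negation is not derivable. -/
def Consistent {AgF At : Type} (AgDer : AgF → AgF → Prop) (agBot : AgF)
    (agOr : AgF → AgF → AgF) (φ : WF AgF At) : Prop :=
  ¬ C5 AgDer agBot agOr (wneg φ)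

/-- `Γ` is a maximal consistent subset of `Σ`. -/
def MCS {AgF At : Type} (AgDer : AgF → AgF → Prop) (agBot : AgF)
    (agOr : AgF → AgF → AgF) (Sig Γ : Finset (WF AgF At)) : Prop :=
  Γ ⊆ Sig ∧ Consistent AgDer agBot agOr (conj Γ.toList) ∧
    ∀ Δ : Finset (WF AgF At), Δ ⊆ Sig → Γ ⊆ Δ →
      Consistent AgDer agBot agOr (conj Δ.toList) → Δ = Γ

/-- The canonical pseudo-relation: `Γ ∼^p_ψ Δ` iff `Γ̂ ∧ P_ψ Δ̂` is consistent. -/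
def relP {AgF At : Type} (AgDer : AgF → AgF → Prop) (agBot : AgF)
    (agOr : AgF → AgF → AgF) (ψ : AgF) (Γ Δ : Finset (WF AgF At)) : Prop :=
  Consistent AgDer agBot agOr (wand (conj Γ.toList) (wP ψ (conj Δ.toList)))

/-- Normalized negation: `¬̇(¬χ) = χ` and `¬̇φ = ¬φ` otherwise. -/
def sneg {AgF At : Type} : WF AgF At → WF AgF At
  | .imp φ .bot => φ
  | φ => wneg φ

/-- The disjunction `⋁_{ψ ∈ l} ψ` of a list of agent formulae. -/
def bigOrA {AgF : Type} (agBot : AgF) (agOr : AgF → AgF → AgF)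
    (l : List AgF) : AgF :=
  l.foldr agOr agBot

/-- Satisfaction in the canonical model `C_Σ`: worlds are the maximal
consistent subsets of `Σ`, world atoms are interpreted by membership, and
`∼_a := ∼^p_{â}`; `C_ψ` is the box over the reflexive-transitive closure of
the union of the `∼_a` for `a ∈ ⟦ψ⟧`. -/
def satCan {AgF At Ag : Type} (AgDer : AgF → AgF → Prop) (agBot : AgF)
    (agOr : AgF → AgF → AgF) (ext : AgF → Finset Ag) (hat : Ag → AgF)
    (Sig : Finset (WF AgF At))
    (Γ : {Θ : Finset (WF AgF At) // MCS AgDer agBot agOr Sig Θ}) :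
    WF AgF At → Prop
  | .bot => False
  | .atom p => WF.atom p ∈ Γ.1
  | .imp φ χ => satCan AgDer agBot agOr ext hat Sig Γ φ →
      satCan AgDer agBot agOr ext hat Sig Γ χ
  | .C ψ φ =>
      ∀ Δ : {Θ : Finset (WF AgF At) // MCS AgDer agBot agOr Sig Θ},
        Relation.ReflTransGen
          (fun Θ Θ' => ∃ a ∈ ext ψ, relP AgDer agBot agOr (hat a) Θ.1 Θ'.1)
          Γ Δ →
        satCan AgDer agBot agOr ext hat Sig Δ φ

/-!
Induction on `φ`; only the case `C_ψ φ` is modal. Since `â ⊢ ψ` for `a ∈ ⟦ψ⟧`, axioms (4)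
and (AM) carry `C_ψ φ` along every step `∼^p_â`, and (T) then yields `φ` at every world
reachable from `Γ`. Conversely, suppose `φ` lies in every world reachable from `Γ`, and let `β`
be the disjunction of the characteristic formulae of these finitely many worlds. The Existence
Lemma gives `β → C_â β` for every `a ∈ ⟦ψ⟧`; the induction axiom turns these into
`β → C_{⋁ â} β`, (AM) into `β → C_ψ β`, and as `β → φ`, (K) yields `Γ̂ → C_ψ φ`.
-/

open Classical

/-- Propositional skeletons: Boolean combinations of world formulae treated as atoms. -/
inductive PForm (W : Type) : Type
  | bot
  | var (w : W)
  | imp (p q : PForm W)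

namespace PForm

variable {W : Type}

def eval (v : W → Prop) : PForm W → Prop
  | bot => False
  | var w => v w
  | imp p q => p.eval v → q.eval v

def vars : PForm W → List W
  | bot => []
  | var w => [w]
  | imp p q => p.vars ++ q.vars

def neg (p : PForm W) : PForm W := p.imp bot

def and (p q : PForm W) : PForm W := (p.imp q.neg).neg

def or (p q : PForm W) : PForm W := p.neg.imp q

@[simp] theorem eval_bot (v : W → Prop) : eval v bot ↔ False := Iff.rfl

@[simp] theorem eval_var (v : W → Prop) (w : W) : eval v (var w) ↔ v w := Iff.rfl

@[simp] theorem eval_imp (v : W → Prop) (p q : PForm W) :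
    eval v (imp p q) ↔ (eval v p → eval v q) := Iff.rfl

@[simp] theorem eval_neg (v : W → Prop) (p : PForm W) : eval v p.neg ↔ ¬ eval v p := Iff.rfl

@[simp] theorem eval_and (v : W → Prop) (p q : PForm W) :
    eval v (p.and q) ↔ (eval v p ∧ eval v q) := by
  simp only [PForm.and, eval_neg, eval_imp]
  tauto

@[simp] theorem eval_or (v : W → Prop) (p q : PForm W) :
    eval v (p.or q) ↔ (eval v p ∨ eval v q) := by
  simp only [PForm.or, eval_neg, eval_imp]
  tauto

def toWF {AgF At : Type} : PForm (WF AgF At) → WF AgF At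
  | bot => .bot
  | var w => w
  | imp p q => .imp p.toWF q.toWF

end PForm

def impList {AgF At : Type} (l : List (WF AgF At)) (φ : WF AgF At) : WF AgF At :=
  l.foldr .imp φ

def wor {AgF At : Type} (φ χ : WF AgF At) : WF AgF At := .imp (wneg φ) χ

def wbigOr {AgF At : Type} (l : List (WF AgF At)) : WF AgF At := l.foldr wor .bot

noncomputable def dnf {AgF At : Type} (R : Finset (Finset (WF AgF At))) : WF AgF At :=
  wbigOr (R.toList.map fun Θ => conj Θ.toList)

noncomputable def literal {AgF At : Type} (v : WF AgF At → Prop) (w : WF AgF At) : WF AgF At :=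
  if v w then w else wneg w

theorem sneg_eq_wneg_or {AgF At : Type} (φ : WF AgF At) :
    sneg φ = wneg φ ∨ ∃ φ', φ = wneg φ' ∧ sneg φ = φ' := by
  rcases φ with _ | _ | ⟨a, _ | _ | _ | _⟩ | _
  all_goals first | exact Or.inl rfl | exact Or.inr ⟨a, rfl, rfl⟩

section CanonicalModel

variable {AgF At Ag : Type} {AgDer : AgF → AgF → Prop} {agBot : AgF} {agOr : AgF → AgF → AgF}

local notation "⊩ " φ => C5 AgDer agBot agOr φ

namespace C5

theorem imp_refl (a : WF AgF At) : ⊩ a.imp a :=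
  mp (mp (ax2 a (a.imp a) a) (ax1 a (a.imp a))) (ax1 a a)

theorem imp_mono_right {x u t : WF AgF At} (h : ⊩ u.imp t) : ⊩ (x.imp u).imp (x.imp t) :=
  mp (ax2 x u t) (mp (ax1 _ _) h)

theorem imp_trans {a b c : WF AgF At} (hab : ⊩ a.imp b) (hbc : ⊩ b.imp c) : ⊩ a.imp c :=
  mp (imp_mono_right hbc) hab

theorem imp_mp {a b c : WF AgF At} (hab : ⊩ c.imp (a.imp b)) (ha : ⊩ c.imp a) : ⊩ c.imp b :=
  mp (mp (ax2 c a b) hab) ha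

theorem impList_mp {l : List (WF AgF At)} {a b : WF AgF At}
    (hab : ⊩ impList l (a.imp b)) (ha : ⊩ impList l a) : ⊩ impList l b := by
  have dist : ∀ l : List (WF AgF At),
      ⊩ (impList l (a.imp b)).imp ((impList l a).imp (impList l b)) := by
    intro l
    induction l with
    | nil => exact imp_refl _
    | cons x l ih => exact imp_trans (imp_mono_right ih) (ax2 x _ _)
  exact mp (mp (dist l) hab) ha

theorem imp_impList (a : WF AgF At) (l : List (WF AgF At)) : ⊩ a.imp (impList l a) := by
  induction l with
  | nil => exact imp_refl a
  | cons x l ih => exact imp_trans ih (ax1 _ x)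

theorem impList_of {l : List (WF AgF At)} {a : WF AgF At} (h : ⊩ a) : ⊩ impList l a :=
  mp (imp_impList a l) h

theorem impList_of_mem {l : List (WF AgF At)} {a : WF AgF At} (h : a ∈ l) :
    ⊩ impList l a := by
  induction l with
  | nil => exact absurd h List.not_mem_nil
  | cons x l ih =>
    rcases List.mem_cons.1 h with rfl | h
    · exact imp_impList a l
    · exact mp (ax1 _ _) (ih h)

theorem imp_neg_neg (a : WF AgF At) : ⊩ a.imp (wneg (wneg a)) := by
  have hna : ⊩ impList [a, wneg a] (wneg a) := impList_of_mem (by simp)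
  have ha : ⊩ impList [a, wneg a] a := impList_of_mem (by simp)
  exact impList_mp hna ha

theorem neg_neg_imp (a : WF AgF At) : ⊩ (wneg (wneg a)).imp a :=
  mp (ax3 a (wneg (wneg a))) (imp_neg_neg (wneg a))

theorem neg_imp_imp (a b : WF AgF At) : ⊩ (wneg a).imp (a.imp b) := by
  have hcontra : ⊩ impList [wneg a] (((wneg b).imp (wneg a)).imp (a.imp b)) :=
    impList_of (ax3 b a)
  have hna : ⊩ impList [wneg a] ((wneg b).imp (wneg a)) :=
    impList_mp (impList_of (ax1 (wneg a) (wneg b))) (impList_of_mem (by simp))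
  exact impList_mp hcontra hna

theorem imp_neg_imp_neg (a b : WF AgF At) : ⊩ a.imp ((wneg b).imp (wneg (a.imp b))) := by
  have hnb : ⊩ impList [a, wneg b, a.imp b] (wneg b) := impList_of_mem (by simp)
  have hb : ⊩ impList [a, wneg b, a.imp b] b :=
    impList_mp (a := a) (impList_of_mem (by simp)) (impList_of_mem (by simp))
  exact impList_mp hnb hb

theorem of_imp_of_neg_imp {a g : WF AgF At} (hpos : ⊩ a.imp g) (hneg : ⊩ (wneg a).imp g) :
    ⊩ g := by
  have hna : ⊩ impList [wneg g] (wneg a) := by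
    have hg : ⊩ impList [wneg g, a] g := impList_mp (impList_of hpos) (impList_of_mem (by simp))
    have hng : ⊩ impList [wneg g, a] (wneg g) := impList_of_mem (by simp)
    exact impList_mp (b := .bot) hng hg
  have hnna : ⊩ impList [wneg g] (wneg (wneg a)) := by
    have hg : ⊩ impList [wneg g, wneg a] g :=
      impList_mp (impList_of hneg) (impList_of_mem (by simp))
    have hng : ⊩ impList [wneg g, wneg a] (wneg g) := impList_of_mem (by simp)
    exact impList_mp (b := .bot) hng hg
  exact mp (neg_neg_imp g) (impList_mp hnna hna)

theorem kalmar (p : PForm (WF AgF At)) (v : WF AgF At → Prop) (L : List (WF AgF At))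
    (hL : ∀ w ∈ p.vars, w ∈ L) :
    ⊩ impList (L.map (literal v)) (if p.eval v then p.toWF else wneg p.toWF) := by
  induction p with
  | bot =>
    rw [if_neg (by simp)]
    exact impList_of (imp_refl .bot)
  | var w =>
    have hw : ⊩ impList (L.map (literal v)) (literal v w) :=
      impList_of_mem (List.mem_map_of_mem (hL w (List.mem_singleton_self w)))
    by_cases h : v w <;> simpa [literal, h, PForm.toWF] using hw
  | imp p q ihp ihq =>
    have hp := ihp fun w hw => hL w (List.mem_append_left _ hw)
    have hq := ihq fun w hw => hL w (List.mem_append_right _ hw)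
    by_cases hqv : q.eval v
    · rw [if_pos hqv] at hq
      rw [if_pos (show (p.imp q).eval v from fun _ => hqv)]
      exact impList_mp (impList_of (ax1 q.toWF p.toWF)) hq
    by_cases hpv : p.eval v
    · rw [if_pos hpv] at hp
      rw [if_neg hqv] at hq
      rw [if_neg (show ¬ (p.imp q).eval v from fun h => hqv (h hpv))]
      exact impList_mp (impList_mp (impList_of (imp_neg_imp_neg p.toWF q.toWF)) hp) hq
    · rw [if_neg hpv] at hp
      rw [if_pos (show (p.imp q).eval v from fun h => absurd h hpv)]
      exact impList_mp (impList_of (neg_imp_imp p.toWF q.toWF)) hp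

theorem of_forall_impList_literal {c : WF AgF At} :
    ∀ L : List (WF AgF At), L.Nodup → (∀ v, ⊩ impList (L.map (literal v)) c) → ⊩ c
  | [], _, h => h fun _ => True
  | w :: L, hnd, h => by
    refine of_forall_impList_literal L hnd.of_cons fun v => ?_
    have hw : w ∉ L := (List.nodup_cons.1 hnd).1
    have hpos : L.map (literal fun x => x = w ∨ v x) = L.map (literal v) :=
      List.map_congr_left fun x hx => by
        simp [literal, show x ≠ w from fun h => hw (h ▸ hx)]
    have hneg : L.map (literal fun x => x ≠ w ∧ v x) = L.map (literal v) :=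
      List.map_congr_left fun x hx => by
        simp [literal, show x ≠ w from fun h => hw (h ▸ hx)]
    have h₁ := h fun x => x = w ∨ v x
    have h₀ := h fun x => x ≠ w ∧ v x
    simp only [List.map_cons, hpos, hneg, literal, true_or, if_true, ne_eq, not_true_eq_false,
      false_and, if_false] at h₁ h₀
    exact of_imp_of_neg_imp h₁ h₀

theorem of_tautology (p : PForm (WF AgF At)) (h : ∀ v, p.eval v) : ⊩ p.toWF := by
  refine of_forall_impList_literal p.vars.dedup p.vars.nodup_dedup fun v => ?_
  simpa [h v] using
    kalmar (AgDer := AgDer) (agBot := agBot) (agOr := agOr) p v p.vars.dedup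
      fun w hw => List.mem_dedup.2 hw

section Tautologies

open PForm

theorem and_left (a b : WF AgF At) : ⊩ (wand a b).imp a :=
  of_tautology (((var a).and (var b)).imp (var a)) fun v => by simp; tauto

theorem and_right (a b : WF AgF At) : ⊩ (wand a b).imp b :=
  of_tautology (((var a).and (var b)).imp (var b)) fun v => by simp

theorem imp_and {a b c : WF AgF At} (ha : ⊩ c.imp a) (hb : ⊩ c.imp b) : ⊩ c.imp (wand a b) :=
  mp (mp (of_tautology (((var c).imp (var a)).imp (((var c).imp (var b)).imp
    ((var c).imp ((var a).and (var b))))) fun v => by simp; tauto) ha) hb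

theorem and_mono {a a' b b' : WF AgF At} (ha : ⊩ a.imp a') (hb : ⊩ b.imp b') :
    ⊩ (wand a b).imp (wand a' b') :=
  imp_and (imp_trans (and_left a b) ha) (imp_trans (and_right a b) hb)

theorem neg_mono {a b : WF AgF At} (h : ⊩ a.imp b) : ⊩ (wneg b).imp (wneg a) :=
  mp (of_tautology (((var a).imp (var b)).imp ((var b).neg.imp (var a).neg))
    fun v => by simp; tauto) h

theorem imp_wor_left (a b : WF AgF At) : ⊩ a.imp (wor a b) :=
  of_tautology ((var a).imp ((var a).or (var b))) fun v => by simp; tauto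

theorem imp_wor_right (a b : WF AgF At) : ⊩ b.imp (wor a b) :=
  of_tautology ((var b).imp ((var a).or (var b))) fun v => by simp; tauto

theorem wor_imp {a b c : WF AgF At} (ha : ⊩ a.imp c) (hb : ⊩ b.imp c) : ⊩ (wor a b).imp c :=
  mp (mp (of_tautology (((var a).imp (var c)).imp (((var b).imp (var c)).imp
    (((var a).or (var b)).imp (var c)))) fun v => by simp; tauto) ha) hb

theorem wor_mono {a a' b b' : WF AgF At} (ha : ⊩ a.imp a') (hb : ⊩ b.imp b') :
    ⊩ (wor a b).imp (wor a' b') :=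
  wor_imp (imp_trans ha (imp_wor_left a' b')) (imp_trans hb (imp_wor_right a' b'))

theorem and_wor_imp (a b c : WF AgF At) :
    ⊩ (wand a (wor b c)).imp (wor (wand a b) (wand a c)) :=
  of_tautology (((var a).and ((var b).or (var c))).imp
    (((var a).and (var b)).or ((var a).and (var c)))) fun v => by simp; tauto

theorem bot_imp (a : WF AgF At) : ⊩ WF.bot.imp a :=
  of_tautology (PForm.bot.imp (var a)) fun v => by simp

theorem imp_top (c : WF AgF At) : ⊩ c.imp (wneg .bot) :=
  of_tautology ((var c).imp PForm.bot.neg) fun v => by simp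

end Tautologies

theorem conj_imp_of_mem {l : List (WF AgF At)} {a : WF AgF At} (h : a ∈ l) :
    ⊩ (conj l).imp a := by
  induction l with
  | nil => exact absurd h List.not_mem_nil
  | cons b l ih =>
    rcases List.mem_cons.1 h with rfl | h
    · exact and_left a (conj l)
    · exact imp_trans (and_right b (conj l)) (ih h)

theorem conj_toList_imp_of_mem {Γ : Finset (WF AgF At)} {a : WF AgF At} (h : a ∈ Γ) :
    ⊩ (conj Γ.toList).imp a :=
  conj_imp_of_mem (Finset.mem_toList.2 h)

theorem imp_conj {l : List (WF AgF At)} {c : WF AgF At} (h : ∀ a ∈ l, ⊩ c.imp a) :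
    ⊩ c.imp (conj l) := by
  induction l with
  | nil => exact imp_top c
  | cons b l ih => exact imp_and (h b (by simp)) (ih fun a ha => h a (List.mem_cons_of_mem _ ha))

theorem and_conj_imp_conj {l l' : List (WF AgF At)} {φ : WF AgF At}
    (h : ∀ a ∈ l', a ∈ l ∨ a = φ) : ⊩ (wand (conj l) φ).imp (conj l') :=
  imp_conj fun a ha => (h a ha).elim
    (fun hl => imp_trans (and_left _ _) (conj_imp_of_mem hl)) (fun e => e ▸ and_right _ _)

theorem imp_wbigOr_of_mem {l : List (WF AgF At)} {a : WF AgF At} (h : a ∈ l) :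
    ⊩ a.imp (wbigOr l) := by
  induction l with
  | nil => exact absurd h List.not_mem_nil
  | cons b l ih =>
    rcases List.mem_cons.1 h with rfl | h
    · exact imp_wor_left a (wbigOr l)
    · exact imp_trans (ih h) (imp_wor_right b (wbigOr l))

theorem wbigOr_imp {l : List (WF AgF At)} {c : WF AgF At} (h : ∀ a ∈ l, ⊩ a.imp c) :
    ⊩ (wbigOr l).imp c := by
  induction l with
  | nil => exact bot_imp c
  | cons b l ih => exact wor_imp (h b (by simp)) (ih fun a ha => h a (List.mem_cons_of_mem _ ha))

theorem conj_imp_dnf {R : Finset (Finset (WF AgF At))} {Θ : Finset (WF AgF At)} (h : Θ ∈ R) :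
    ⊩ (conj Θ.toList).imp (dnf R) :=
  imp_wbigOr_of_mem (List.mem_map_of_mem (Finset.mem_toList.2 h))

theorem dnf_imp {R : Finset (Finset (WF AgF At))} {c : WF AgF At}
    (h : ∀ Θ ∈ R, ⊩ (conj Θ.toList).imp c) : ⊩ (dnf R).imp c :=
  wbigOr_imp fun _ ha => by
    obtain ⟨Θ, hΘ, rfl⟩ := List.mem_map.1 ha
    exact h Θ (Finset.mem_toList.1 hΘ)

theorem C_mono (ψ : AgF) {a b : WF AgF At} (h : ⊩ a.imp b) : ⊩ (WF.C ψ a).imp (WF.C ψ b) :=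
  mp (axK ψ a b) (nec ψ h)

theorem P_mono (ψ : AgF) {a b : WF AgF At} (h : ⊩ a.imp b) : ⊩ (wP ψ a).imp (wP ψ b) :=
  neg_mono (C_mono ψ (neg_mono h))

open PForm in
theorem P_wor (ψ : AgF) (a b : WF AgF At) : ⊩ (wP ψ (wor a b)).imp (wor (wP ψ a) (wP ψ b)) := by
  have hna : ⊩ (wneg a).imp ((wneg b).imp (wneg (wor a b))) :=
    of_tautology ((var a).neg.imp ((var b).neg.imp ((var a).or (var b)).neg))
      fun v => by simp; tauto
  have hCna : ⊩ (WF.C ψ (wneg a)).imp ((WF.C ψ (wneg b)).imp (.C ψ (wneg (wor a b)))) :=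
    imp_trans (mp (axK ψ _ _) (nec ψ hna)) (axK ψ (wneg b) (wneg (wor a b)))
  exact mp (of_tautology (((var (WF.C ψ (wneg a))).imp ((var (WF.C ψ (wneg b))).imp
      (var (WF.C ψ (wneg (wor a b)))))).imp
      ((var (WF.C ψ (wneg (wor a b)))).neg.imp
        ((var (WF.C ψ (wneg a))).neg.neg.imp (var (WF.C ψ (wneg b))).neg)))
    fun v => by simp; tauto) hCna

open PForm in
theorem C_and_P_neg_imp_bot (ψ : AgF) (a : WF AgF At) :
    ⊩ (wand (WF.C ψ a) (wP ψ (wneg a))).imp .bot :=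
  mp (of_tautology (((var (WF.C ψ a)).imp (var (WF.C ψ (wneg (wneg a))))).imp
      (((var (WF.C ψ a)).and (var (WF.C ψ (wneg (wneg a)))).neg).imp PForm.bot))
    fun v => by simp) (C_mono ψ (imp_neg_neg a))

theorem imp_C_bigOrA {β : WF AgF At} :
    ∀ l : List AgF, (∀ ψ ∈ l, ⊩ β.imp (.C ψ β)) → ⊩ β.imp (.C (bigOrA agBot agOr l) β)
  | [], _ => axBot β
  | ψ :: l, h =>
    have hl := imp_C_bigOrA l fun χ hχ => h χ (List.mem_cons_of_mem _ hχ)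
    mp (axInd ψ (bigOrA agBot agOr l) β)
      (nec (agOr ψ (bigOrA agBot agOr l)) (imp_and (h ψ List.mem_cons_self) hl))

theorem neg_imp_sneg (φ : WF AgF At) : ⊩ (wneg φ).imp (sneg φ) := by
  rcases sneg_eq_wneg_or φ with h | ⟨φ', rfl, h⟩
  · rw [h]; exact imp_refl _
  · rw [h]; exact neg_neg_imp φ'

theorem sneg_imp_neg (φ : WF AgF At) : ⊩ (sneg φ).imp (wneg φ) := by
  rcases sneg_eq_wneg_or φ with h | ⟨φ', rfl, h⟩
  · rw [h]; exact imp_refl _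
  · rw [h]; exact imp_neg_neg φ'

theorem neg_conj_of_mem_of_sneg_mem {l : List (WF AgF At)} {φ : WF AgF At}
    (hφ : φ ∈ l) (hsφ : sneg φ ∈ l) : ⊩ wneg (conj l) :=
  imp_mp (imp_trans (conj_imp_of_mem hφ) (imp_neg_neg φ))
    (imp_trans (conj_imp_of_mem hsφ) (sneg_imp_neg φ))

open PForm in
theorem imp_wor_and_sneg (x φ : WF AgF At) : ⊩ x.imp (wor (wand x φ) (wand x (sneg φ))) :=
  imp_trans (of_tautology ((var x).imp (((var x).and (var φ)).or ((var x).and (var φ).neg)))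
    fun v => by simp; tauto) (wor_mono (imp_refl _) (and_mono (imp_refl x) (neg_imp_sneg φ)))

end C5

open C5

theorem Consistent.mono {a b : WF AgF At} (hc : Consistent AgDer agBot agOr a)
    (h : ⊩ a.imp b) : Consistent AgDer agBot agOr b :=
  fun hb => hc (imp_trans h hb)

theorem Consistent.or_of_imp_wor {a b c : WF AgF At} (hc : Consistent AgDer agBot agOr a)
    (h : ⊩ a.imp (wor b c)) : Consistent AgDer agBot agOr b ∨ Consistent AgDer agBot agOr c := by
  by_contra! hbc
  exact hc (imp_trans h (wor_imp (not_not.1 hbc.1) (not_not.1 hbc.2)))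

theorem Consistent.of_and_P {x y : WF AgF At} {ψ : AgF}
    (hc : Consistent AgDer agBot agOr (wand y (wP ψ x))) : Consistent AgDer agBot agOr x :=
  fun hx => hc (imp_trans (and_right y _) (mp (imp_neg_neg _) (nec ψ hx)))

theorem Consistent.and_P_split {χ A : WF AgF At} {a : AgF}
    (hc : Consistent AgDer agBot agOr (wand χ (wP a A))) (φ : WF AgF At) :
    Consistent AgDer agBot agOr (wand χ (wP a (wand A φ))) ∨
      Consistent AgDer agBot agOr (wand χ (wP a (wand A (sneg φ)))) :=
  hc.or_of_imp_wor <| imp_trans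
    (and_mono (imp_refl χ) (imp_trans (P_mono a (imp_wor_and_sneg A φ)) (P_wor a _ _)))
    (and_wor_imp _ _ _)

open PForm in
theorem consistent_and_P_neg {c β : WF AgF At} {a : AgF} (h : ¬ ⊩ c.imp (WF.C a β)) :
    Consistent AgDer agBot agOr (wand c (wP a (wneg β))) := fun hinc =>
  h <| imp_trans (mp (of_tautology ((((var c).and (var (WF.C a (wneg (wneg β)))).neg).imp
      PForm.bot).imp ((var c).imp (var (WF.C a (wneg (wneg β)))))) fun v => by simp) hinc)
    (C_mono a (neg_neg_imp β))

namespace MCS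

variable {Sig Γ : Finset (WF AgF At)}

theorem bot_not_mem (hΓ : MCS AgDer agBot agOr Sig Γ) : WF.bot ∉ Γ :=
  fun h => hΓ.2.1 (conj_toList_imp_of_mem h)

theorem mem_of_consistent_insert (hΓ : MCS AgDer agBot agOr Sig Γ) {φ : WF AgF At}
    (hφ : φ ∈ Sig) (hc : Consistent AgDer agBot agOr (conj (insert φ Γ).toList)) : φ ∈ Γ :=
  hΓ.2.2 _ (Finset.insert_subset hφ hΓ.1) (Finset.subset_insert _ _) hc ▸
    Finset.mem_insert_self φ Γ

theorem mem_of_derives (hΓ : MCS AgDer agBot agOr Sig Γ) {φ : WF AgF At} (hφ : φ ∈ Sig)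
    (hd : ⊩ (conj Γ.toList).imp φ) : φ ∈ Γ :=
  hΓ.mem_of_consistent_insert hφ <| hΓ.2.1.mono <| imp_conj fun a ha => by
    rcases Finset.mem_insert.1 (Finset.mem_toList.1 ha) with rfl | ha
    · exact hd
    · exact conj_toList_imp_of_mem ha

open PForm in
theorem mem_or_sneg_mem (hΓ : MCS AgDer agBot agOr Sig Γ) (hsneg : ∀ φ ∈ Sig, sneg φ ∈ Sig)
    {φ : WF AgF At} (hφ : φ ∈ Sig) : φ ∈ Γ ∨ sneg φ ∈ Γ := by
  refine or_iff_not_imp_left.2 fun hφΓ => hΓ.mem_of_derives (hsneg φ hφ) ?_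
  have hinc : ¬ Consistent AgDer agBot agOr (conj (insert φ Γ).toList) :=
    fun hc => hφΓ (hΓ.mem_of_consistent_insert hφ hc)
  have hsplit : ⊩ (wand (conj Γ.toList) φ).imp (conj (insert φ Γ).toList) :=
    and_conj_imp_conj fun a ha => by
      rcases Finset.mem_insert.1 (Finset.mem_toList.1 ha) with rfl | ha
      · exact Or.inr rfl
      · exact Or.inl (Finset.mem_toList.2 ha)
  have hnφ : ⊩ (conj Γ.toList).imp (wneg φ) :=
    mp (of_tautology ((((var (conj Γ.toList)).and (var φ)).imp PForm.bot).imp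
      ((var (conj Γ.toList)).imp (var φ).neg)) fun v => by simp)
      (imp_trans hsplit (not_not.1 hinc))
  exact imp_trans hnφ (neg_imp_sneg φ)

theorem imp_mem_iff (hΓ : MCS AgDer agBot agOr Sig Γ) (hsneg : ∀ φ ∈ Sig, sneg φ ∈ Sig)
    {φ χ : WF AgF At} (himp : φ.imp χ ∈ Sig) (hφ : φ ∈ Sig) (hχ : χ ∈ Sig) :
    φ.imp χ ∈ Γ ↔ (φ ∈ Γ → χ ∈ Γ) := by
  refine ⟨fun h hφΓ => hΓ.mem_of_derives hχ
    (imp_mp (conj_toList_imp_of_mem h) (conj_toList_imp_of_mem hφΓ)), fun h => ?_⟩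
  refine hΓ.mem_of_derives himp ?_
  rcases hΓ.mem_or_sneg_mem hsneg hφ with hφΓ | hsφΓ
  · exact imp_trans (conj_toList_imp_of_mem (h hφΓ)) (ax1 χ φ)
  · exact imp_trans (conj_toList_imp_of_mem hsφΓ)
      (imp_trans (sneg_imp_neg φ) (neg_imp_imp φ χ))

theorem of_complete (hsub : Γ ⊆ Sig) (hcons : Consistent AgDer agBot agOr (conj Γ.toList))
    (hcomp : ∀ φ ∈ Sig, φ ∈ Γ ∨ sneg φ ∈ Γ) : MCS AgDer agBot agOr Sig Γ := by
  refine ⟨hsub, hcons, fun Δ hΔ hΓΔ hΔcons => ?_⟩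
  refine Finset.Subset.antisymm (fun φ hφΔ => ?_) hΓΔ
  refine (hcomp φ (hΔ hφΔ)).resolve_right fun hsφΓ => hΔcons ?_
  exact neg_conj_of_mem_of_sneg_mem (Finset.mem_toList.2 hφΔ) (Finset.mem_toList.2 (hΓΔ hsφΓ))

theorem mem_of_C_mem (hΓ : MCS AgDer agBot agOr Sig Γ) {ψ : AgF} {φ : WF AgF At}
    (hφ : φ ∈ Sig) (h : WF.C ψ φ ∈ Γ) : φ ∈ Γ :=
  hΓ.mem_of_derives hφ (imp_trans (conj_toList_imp_of_mem h) (axT ψ φ))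

theorem C_mem_of_relP {Δ : Finset (WF AgF At)} (hΔ : MCS AgDer agBot agOr Sig Δ)
    (hsneg : ∀ φ ∈ Sig, sneg φ ∈ Sig) {ψ a : AgF} {φ : WF AgF At} (hC : WF.C ψ φ ∈ Sig)
    (ha : AgDer a ψ) (hrel : relP AgDer agBot agOr a Γ Δ) (hΓ : WF.C ψ φ ∈ Γ) :
    WF.C ψ φ ∈ Δ := by
  refine (hΔ.mem_or_sneg_mem hsneg hC).resolve_right fun hsΔ => hrel ?_
  have hΓC : ⊩ (conj Γ.toList).imp (WF.C a (.C ψ φ)) :=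
    imp_trans (conj_toList_imp_of_mem hΓ) (imp_trans (ax4 ψ φ) (am (.C ψ φ) ha))
  have hΔC : ⊩ (conj Δ.toList).imp (wneg (WF.C ψ φ)) :=
    imp_trans (conj_toList_imp_of_mem hsΔ) (sneg_imp_neg _)
  exact imp_trans (and_mono hΓC (P_mono a hΔC)) (C_and_P_neg_imp_bot a (.C ψ φ))

end MCS

/-- Lindenbaum's construction inside the finite closure `Sig`. -/
theorem exists_complete_of_step {Sig : Finset (WF AgF At)} (Con : Finset (WF AgF At) → Prop)
    (hsneg : ∀ φ ∈ Sig, sneg φ ∈ Sig)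
    (hstep : ∀ Δ φ, Con Δ → Con (insert φ Δ) ∨ Con (insert (sneg φ) Δ)) (h0 : Con ∅) :
    ∀ s ⊆ Sig, ∃ Δ ⊆ Sig, Con Δ ∧ ∀ φ ∈ s, φ ∈ Δ ∨ sneg φ ∈ Δ := by
  intro s
  induction s using Finset.induction_on with
  | empty => exact fun _ => ⟨∅, Finset.empty_subset _, h0, by simp⟩
  | insert φ s _ ih =>
    intro hs
    obtain ⟨Δ, hΔS, hΔ, hcomp⟩ := ih ((Finset.subset_insert _ _).trans hs)
    have hφS : φ ∈ Sig := hs (Finset.mem_insert_self φ s)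
    have hcomp' : ∀ χ, ∀ ψ ∈ s, ψ ∈ insert χ Δ ∨ sneg ψ ∈ insert χ Δ := fun χ ψ hψ =>
      (hcomp ψ hψ).imp Finset.mem_insert_of_mem Finset.mem_insert_of_mem
    rcases hstep Δ φ hΔ with h | h
    · refine ⟨insert φ Δ, Finset.insert_subset hφS hΔS, h, ?_⟩
      exact Finset.forall_mem_insert _ _ _ |>.2 ⟨Or.inl (Finset.mem_insert_self φ Δ), hcomp' φ⟩
    · refine ⟨insert (sneg φ) Δ, Finset.insert_subset (hsneg φ hφS) hΔS, h, ?_⟩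
      exact Finset.forall_mem_insert _ _ _ |>.2
        ⟨Or.inr (Finset.mem_insert_self _ Δ), hcomp' (sneg φ)⟩

/-- The Existence Lemma. -/
theorem exists_relP_not_derives {Sig : Finset (WF AgF At)} (hsneg : ∀ φ ∈ Sig, sneg φ ∈ Sig)
    {Θ : Finset (WF AgF At)} {a : AgF} {β : WF AgF At}
    (hnot : ¬ ⊩ (conj Θ.toList).imp (WF.C a β)) :
    ∃ Δ, MCS AgDer agBot agOr Sig Δ ∧ relP AgDer agBot agOr a Θ Δ ∧
      ¬ ⊩ (conj Δ.toList).imp β := by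
  let Con : Finset (WF AgF At) → Prop := fun Δ =>
    Consistent AgDer agBot agOr (wand (conj Θ.toList) (wP a (conj (wneg β :: Δ.toList))))
  have h0 : Con ∅ := (consistent_and_P_neg hnot).mono <|
    and_mono (imp_refl _) (P_mono a (imp_conj fun x hx => by
      obtain rfl : x = wneg β := by simpa using hx
      exact imp_refl _))
  have hstep : ∀ Δ φ, Con Δ → Con (insert φ Δ) ∨ Con (insert (sneg φ) Δ) := fun Δ φ hΔ =>
    have hinsert : ∀ χ, ⊩ (wand (conj (wneg β :: Δ.toList)) χ).imp
        (conj (wneg β :: (insert χ Δ).toList)) := fun χ => and_conj_imp_conj fun x hx => by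
      simp only [List.mem_cons, Finset.mem_toList, Finset.mem_insert] at hx ⊢
      tauto
    (hΔ.and_P_split φ).imp (·.mono (and_mono (imp_refl _) (P_mono a (hinsert φ))))
      (·.mono (and_mono (imp_refl _) (P_mono a (hinsert (sneg φ)))))
  obtain ⟨Δ, hΔS, hΔ, hcomp⟩ := exists_complete_of_step Con hsneg hstep h0 Sig subset_rfl
  have hcons : Consistent AgDer agBot agOr (conj (wneg β :: Δ.toList)) := hΔ.of_and_P
  refine ⟨Δ, MCS.of_complete hΔS (hcons.mono (and_right _ _)) hcomp,
    hΔ.mono (and_mono (imp_refl _) (P_mono a (and_right _ _))), fun hβ => hcons ?_⟩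
  exact imp_mp (and_left (wneg β) _) (imp_trans (and_right _ _) hβ)

variable {Sig : Finset (WF AgF At)}

def canRel (ext : AgF → Finset Ag) (hat : Ag → AgF) (ψ : AgF)
    (Θ Δ : {Θ : Finset (WF AgF At) // MCS AgDer agBot agOr Sig Θ}) : Prop :=
  ∃ a ∈ ext ψ, relP AgDer agBot agOr (hat a) Θ.1 Δ.1

variable {ext : AgF → Finset Ag} {hat : Ag → AgF}

theorem C_mem_of_reflTransGen (hsneg : ∀ φ ∈ Sig, sneg φ ∈ Sig) {ψ : AgF} {φ : WF AgF At}
    (hder2 : ∀ a ∈ ext ψ, AgDer (hat a) ψ) (hC : WF.C ψ φ ∈ Sig)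
    {Γ Δ : {Θ : Finset (WF AgF At) // MCS AgDer agBot agOr Sig Θ}}
    (hΓΔ : Relation.ReflTransGen (canRel ext hat ψ) Γ Δ) (hΓ : WF.C ψ φ ∈ Γ.1) :
    WF.C ψ φ ∈ Δ.1 := by
  induction hΓΔ with
  | refl => exact hΓ
  | tail _ hstep ih =>
    obtain ⟨a, ha, hrel⟩ := hstep
    exact MCS.C_mem_of_relP (Subtype.prop _) hsneg hC (hder2 a ha) hrel ih

theorem imp_C_dnf_of_closed (hsneg : ∀ φ ∈ Sig, sneg φ ∈ Sig) {a : AgF}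
    (R : Finset (Finset (WF AgF At)))
    (hR : ∀ Θ ∈ R, ∀ Δ, MCS AgDer agBot agOr Sig Δ → relP AgDer agBot agOr a Θ Δ → Δ ∈ R) :
    ⊩ (dnf R).imp (WF.C a (dnf R)) :=
  dnf_imp fun Θ hΘ => by
    by_contra hnot
    obtain ⟨Δ, hΔ, hrel, hΔβ⟩ := exists_relP_not_derives hsneg hnot
    exact hΔβ (conj_imp_dnf (hR Θ hΘ Δ hΔ hrel))

theorem MCS.C_mem_of_closed {Γ : Finset (WF AgF At)} (hΓ : MCS AgDer agBot agOr Sig Γ)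
    (hsneg : ∀ φ ∈ Sig, sneg φ ∈ Sig) {ψ : AgF} {φ : WF AgF At}
    (hder : AgDer ψ (bigOrA agBot agOr ((ext ψ).toList.map hat))) (hC : WF.C ψ φ ∈ Sig)
    (R : Finset (Finset (WF AgF At)))
    (hR : ∀ Θ ∈ R, ∀ Δ, MCS AgDer agBot agOr Sig Δ →
      ∀ a ∈ ext ψ, relP AgDer agBot agOr (hat a) Θ Δ → Δ ∈ R)
    (hφR : ∀ Θ ∈ R, φ ∈ Θ) (hΓR : Γ ∈ R) : WF.C ψ φ ∈ Γ := by
  have hβ : ⊩ (dnf R).imp (WF.C ψ (dnf R)) := by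
    refine imp_trans (imp_C_bigOrA _ fun x hx => ?_) (am _ hder)
    obtain ⟨a, ha, rfl⟩ := List.mem_map.1 hx
    exact imp_C_dnf_of_closed hsneg R fun Θ hΘ Δ hΔ => hR Θ hΘ Δ hΔ a (Finset.mem_toList.1 ha)
  have hβφ : ⊩ (dnf R).imp φ := dnf_imp fun Θ hΘ => conj_toList_imp_of_mem (hφR Θ hΘ)
  exact hΓ.mem_of_derives hC (imp_trans (conj_imp_dnf hΓR) (imp_trans hβ (C_mono ψ hβφ)))

theorem C_mem_iff_forall_reflTransGen (hsneg : ∀ φ ∈ Sig, sneg φ ∈ Sig) {ψ : AgF}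
    {φ : WF AgF At} (hder : AgDer ψ (bigOrA agBot agOr ((ext ψ).toList.map hat)))
    (hder2 : ∀ a ∈ ext ψ, AgDer (hat a) ψ) (hC : WF.C ψ φ ∈ Sig) (hφ : φ ∈ Sig)
    (Γ : {Θ : Finset (WF AgF At) // MCS AgDer agBot agOr Sig Θ}) :
    WF.C ψ φ ∈ Γ.1 ↔ ∀ Δ, Relation.ReflTransGen (canRel ext hat ψ) Γ Δ → φ ∈ Δ.1 := by
  refine ⟨fun h Δ hΓΔ => Δ.2.mem_of_C_mem hφ (C_mem_of_reflTransGen hsneg hder2 hC hΓΔ h),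
    fun h => ?_⟩
  let R := Sig.powerset.filter fun Θ =>
    ∃ hΘ : MCS AgDer agBot agOr Sig Θ, Relation.ReflTransGen (canRel ext hat ψ) Γ ⟨Θ, hΘ⟩
  refine Γ.2.C_mem_of_closed hsneg hder hC R ?_ ?_
    (Finset.mem_filter.2 ⟨Finset.mem_powerset.2 Γ.2.1, Γ.2, .refl⟩)
  · intro Θ hΘ Δ hΔ a ha hrel
    obtain ⟨_, hΓΘ⟩ := (Finset.mem_filter.1 hΘ).2
    exact Finset.mem_filter.2 ⟨Finset.mem_powerset.2 hΔ.1, hΔ, hΓΘ.tail ⟨a, ha, hrel⟩⟩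
  · intro Θ hΘ
    obtain ⟨hΘ, hΓΘ⟩ := (Finset.mem_filter.1 hΘ).2
    exact h ⟨Θ, hΘ⟩ hΓΘ

end CanonicalModel

theorem truth_lemma_general {AgF At Ag : Type} (AgDer : AgF → AgF → Prop)
    (agBot : AgF) (agOr : AgF → AgF → AgF)
    (ext : AgF → Finset Ag) (hat : Ag → AgF)
    (hder : ∀ ψ : AgF, AgDer ψ (bigOrA agBot agOr ((ext ψ).toList.map hat)))
    (hder2 : ∀ (ψ : AgF), ∀ a ∈ ext ψ, AgDer (hat a) ψ)
    (Sig : Finset (WF AgF At))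
    (hsubImp : ∀ φ χ : WF AgF At, WF.imp φ χ ∈ Sig → φ ∈ Sig ∧ χ ∈ Sig)
    (hsubC : ∀ (ψ : AgF) (φ : WF AgF At), WF.C ψ φ ∈ Sig → φ ∈ Sig)
    (hsneg : ∀ φ ∈ Sig, sneg φ ∈ Sig)
    (φ : WF AgF At) (hφ : φ ∈ Sig)
    (Γ : {Θ : Finset (WF AgF At) // MCS AgDer agBot agOr Sig Θ}) :
    φ ∈ Γ.1 ↔ satCan AgDer agBot agOr ext hat Sig Γ φ := by
  induction φ generalizing Γ with
  | bot => exact ⟨fun h => Γ.2.bot_not_mem h, False.elim⟩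
  | atom p => exact Iff.rfl
  | imp φ χ ihφ ihχ =>
    obtain ⟨hφS, hχS⟩ := hsubImp φ χ hφ
    rw [Γ.2.imp_mem_iff hsneg hφ hφS hχS, ihφ hφS, ihχ hχS]
    rfl
  | C ψ φ ih =>
    have hφS := hsubC ψ φ hφ
    rw [C_mem_iff_forall_reflTransGen hsneg (hder ψ) (hder2 ψ) hφ hφS]
    exact forall_congr' fun Δ => imp_congr_right fun _ => ih hφS Δ

/-- Truth Lemma: for every world `Γ` of the canonical model and every formula
`φ ∈ Σ`, we have `φ ∈ Γ` iff `C_Σ, Γ ⊨ φ`. -/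
theorem truth_lemma {AgF At Ag : Type} (AgDer : AgF → AgF → Prop)
    (agBot : AgF) (agOr : AgF → AgF → AgF)
    (hOr1 : ∀ ψ χ, AgDer ψ (agOr ψ χ))
    (hOr2 : ∀ ψ χ, AgDer χ (agOr ψ χ))
    (ext : AgF → Finset Ag) (hat : Ag → AgF)
    (hhat : ∀ a : Ag, ext (hat a) = {a})
    (hder : ∀ ψ : AgF, AgDer ψ (bigOrA agBot agOr ((ext ψ).toList.map hat)))
    (hder2 : ∀ (ψ : AgF), ∀ a ∈ ext ψ, AgDer (hat a) ψ)
    (Sig : Finset (WF AgF At))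
    (hsubImp : ∀ φ χ : WF AgF At, WF.imp φ χ ∈ Sig → φ ∈ Sig ∧ χ ∈ Sig)
    (hsubC : ∀ (ψ : AgF) (φ : WF AgF At), WF.C ψ φ ∈ Sig → φ ∈ Sig)
    (hsneg : ∀ φ ∈ Sig, sneg φ ∈ Sig)
    (hChat : ∀ (χ : AgF) (φ : WF AgF At), WF.C χ φ ∈ Sig →
      ∀ a : Ag, WF.C (hat a) φ ∈ Sig)
    (φ : WF AgF At) (hφ : φ ∈ Sig)
    (Γ : {Θ : Finset (WF AgF At) // MCS AgDer agBot agOr Sig Θ}) :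
    φ ∈ Γ.1 ↔ satCan AgDer agBot agOr ext hat Sig Γ φ :=
  truth_lemma_general AgDer agBot agOr ext hat hder hder2 Sig hsubImp hsubC hsneg φ hφ Γ
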